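/- Let G be a weighted cyclic monotone circuit and let α, β : V → {0,1} be two acyclic valid evaluations of G. If α and β agree on the set V_in of inputs of G, then α = β. That is, an acyclic valid evaluation is uniquely determined by its values on the inputs. -/
import Mathlib


/-- Gate types for a monotone circuit. -/
inductive Gate where
  | AND : Gate
  | OR : Gate
deriving DecidableEq

/-- A weighted cyclic monotone circuit: a directed graph with a set of outputs,
a gate-type function, and a cost function (costs are only meaningful on inputs). -/
structure Circuit (V : Type) where
  edge : V → V → Prop
  isOut : V → Prop
  gate : V → Gate
  cost : V → ℝ

namespace Circuit

variable {V : Type}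

/-- The inputs are the vertices of in-degree 0. -/
def IsInput (G : Circuit V) (u : V) : Prop := ∀ v, ¬ G.edge v u

/-- A valid evaluation: each non-input gate evaluates to its gate function applied to
the values of its in-neighbors. -/
def Valid (G : Circuit V) (α : V → Bool) : Prop :=
  ∀ u : V, ¬ G.IsInput u →
    (α u = true ↔
      match G.gate u with
      | Gate.AND => ∀ v, G.edge v u → α v = true
      | Gate.OR => ∃ v, G.edge v u ∧ α v = true)

/-- An evaluation satisfies the circuit if it is 1 on all outputs. -/
def Satisfies (G : Circuit V) (α : V → Bool) : Prop :=
  ∀ u, G.isOut u → α u = true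

/-- The restriction `α|_A`: equal to `α` on `A` and `0` (false) elsewhere. -/
noncomputable def restrict (α : V → Bool) (A : Set V) : V → Bool :=
  fun u => @ite _ (u ∈ A) (Classical.propDecidable _) (α u) false

/-- A minimal satisfying evaluation: valid, satisfying, and no restriction of its
true set to a proper subset is a valid satisfying evaluation. -/
def MinSat (G : Circuit V) (α : V → Bool) : Prop :=
  G.Valid α ∧ G.Satisfies α ∧
    ∀ A : Set V, A ⊂ {u | α u = true} →
      ¬ (G.Valid (restrict α A) ∧ G.Satisfies (restrict α A))

/-- `α` is acyclic if the subgraph `G[α]` induced by the true vertices has no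
directed cycle. -/
def EvalAcyclic (G : Circuit V) (α : V → Bool) : Prop :=
  ∀ u, ¬ Relation.TransGen (fun a b => G.edge a b ∧ α a = true ∧ α b = true) u u

end Circuit



lemma mono_aux {V : Type} [Fintype V] (G : Circuit V) (α β : V → Bool)
    (hα : G.Valid α) (hβ : G.Valid β)
    (hacα : G.EvalAcyclic α)
    (hagree : ∀ u, G.IsInput u → α u = β u) :
    ∀ u, α u = true → β u = true := by
  have hwf : WellFounded (fun a b => G.edge a b ∧ α a = true ∧ α b = true) := by
    haveI : IsIrrefl V (Relation.TransGen
        (fun a b => G.edge a b ∧ α a = true ∧ α b = true)) := ⟨hacα⟩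
    haveI : IsTrans V (Relation.TransGen
        (fun a b => G.edge a b ∧ α a = true ∧ α b = true)) :=
      ⟨fun _ _ _ => Relation.TransGen.trans⟩
    exact Subrelation.wf (r := Relation.TransGen
        (fun a b => G.edge a b ∧ α a = true ∧ α b = true))
      (fun h => Relation.TransGen.single h)
      (Finite.wellFounded_of_trans_of_irrefl
        (Relation.TransGen (fun a b => G.edge a b ∧ α a = true ∧ α b = true)))
  intro u
  induction u using hwf.induction with
  | _ u IH =>
    intro hu
    by_cases hin : G.IsInput u
    · rw [← hagree u hin]; exact hu
    · have h1 := (hα u hin).mp hu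
      apply (hβ u hin).mpr
      cases hg : G.gate u <;> rw [hg] at h1 <;> simp only at h1 ⊢
      · intro v hv
        exact IH v ⟨hv, h1 v hv, hu⟩ (h1 v hv)
      · obtain ⟨v, hv, hαv⟩ := h1
        exact ⟨v, hv, IH v ⟨hv, hαv, hu⟩ hαv⟩

/-- an acyclic valid evaluation of a (finite) weighted cyclic monotone
circuit is uniquely determined by its values on the inputs. -/
theorem stmt0 {V : Type} [Fintype V] (G : Circuit V) (α β : V → Bool)
    (hα : G.Valid α) (hβ : G.Valid β)
    (hacα : G.EvalAcyclic α) (hacβ : G.EvalAcyclic β)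
    (hagree : ∀ u, G.IsInput u → α u = β u) :
    α = β := by
  funext u
  have h1 := mono_aux G α β hα hβ hacα hagree u
  have h2 := mono_aux G β α hβ hα hacβ (fun u h => (hagree u h).symm) u
  cases hα' : α u <;> cases hβ' : β u <;> simp_all
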